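/- arXiv:2305.13818 — 4 statements merged into one kernel-verified Lean document; each statement's English description precedes it below -/
import Mathlib

section
/- Let f(x) = x·log(x) (with f(0)=0). Then for all real numbers x, y with 0 ≤ x ≤ y ≤ e⁻¹, we have |f(x) − f(y)| ≤ −(y−x)·log(y−x). -/
open Real

-- f(t) = t * log t is antitone on [0, e⁻¹]
lemma mul_log_anti : AntitoneOn (fun t : ℝ => t * Real.log t) (Set.Icc 0 (Real.exp (-1))) := by
  have h1 : StrictAntiOn (fun t : ℝ => t * Real.log t) (Set.Icc 0 (Real.exp (-1))) := by
    apply StrictAntiOn.mono (s := Set.Icc 0 (Real.exp (-1)))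
    · apply strictAntiOn_of_deriv_neg (convex_Icc _ _)
        (Real.continuous_mul_log.continuousOn)
      intro t ht
      rw [interior_Icc] at ht
      rw [Real.deriv_mul_log (ne_of_gt ht.1)]
      have : Real.log t < Real.log (Real.exp (-1)) := Real.log_lt_log ht.1 ht.2
      rw [Real.log_exp] at this
      linarith
    · exact le_refl _
  exact h1.antitoneOn

theorem log_lipschitz (x y : ℝ) (hx : 0 ≤ x) (hxy : x ≤ y) (hy : y ≤ Real.exp (-1)) :
    |x * Real.log x - y * Real.log y| ≤ -((y - x) * Real.log (y - x)) := by
  set h := y - x with hh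
  have hh0 : 0 ≤ h := by linarith
  have hhy : h ≤ y := by linarith
  have hy0 : 0 ≤ y := le_trans hx hxy
  have hexp1 : Real.exp (-1) < 1 := by
    rw [← Real.exp_zero]; exact Real.exp_lt_exp.2 (by norm_num)
  rw [abs_sub_le_iff]
  constructor
  · -- x log x - y log y ≤ -(h log h): x log x + h log h ≤ y log y
    have hx' : x * Real.log x ≤ x * Real.log y := by
      rcases eq_or_lt_of_le hx with rfl | hx0
      · simp
      · exact mul_le_mul_of_nonneg_left (Real.log_le_log hx0 hxy) hx
    have hh' : h * Real.log h ≤ h * Real.log y := by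
      rcases eq_or_lt_of_le hh0 with heq | hh0'
      · simp [← heq]
      · exact mul_le_mul_of_nonneg_left (Real.log_le_log hh0' hhy) hh0
    have : x * Real.log y + h * Real.log y = y * Real.log y := by rw [hh]; ring
    nlinarith
  · -- y log y - x log x ≤ -(h log h)
    have h1 : y * Real.log y ≤ x * Real.log x :=
      mul_log_anti ⟨hx, le_trans hxy hy⟩ ⟨hy0, hy⟩ hxy
    have h2 : h * Real.log h ≤ 0 :=
      Real.mul_log_nonpos hh0 (by linarith)
    linarith
end

section
/- Let X₁, X₂, … be an i.i.d. sequence of real random variables with continuous distribution function F. For each n, define the normalized sequential rank ρ_n = (1/n)·∑_{i=1}^n 1{X_i ≤ X_n}. Then for every N, the random variables ρ_1, …, ρ_N are independent and ρ_n is uniformly distributed on {1/n, 2/n, …, n/n}. -/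
/-!
Among `N` observations ties have probability zero, so almost surely the tuple is sorted by
exactly one permutation `σ`, and since coordinate permutations preserve the product law, each of
the `N!` permutations has probability `1 / N!`. The vector of sequential ranks
`(r₀, …, r_{N-1})`, with `rₙ ∈ {1, …, n + 1}`, depends only on `σ`, and it determines `σ`: for
`i < j`, whether `xᵢ < xⱼ` can be read off from `rⱼ` and the relative order of `x₀, …, x_{j-1}`.
As there are `N! = ∏ (n + 1)` possible rank vectors, the rank vector is uniform on
`∏ {1, …, n + 1}`, i.e. its coordinates are independent and uniform.
-/

open MeasureTheory ProbabilityTheory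

/-- The normalized sequential rank of `X n` among `X 0, …, X n`
(so `n + 1` observations have been seen). -/
noncomputable def seqRank (X : ℕ → Ω → ℝ) (n : ℕ) (ω : Ω) : ℝ :=
  (1 / (n + 1 : ℝ)) * ∑ i ∈ Finset.range (n + 1), if X i ω ≤ X n ω then (1 : ℝ) else 0

open Finset Function
open scoped Nat ENNReal

section SeqRankCount

variable {α β : Type*} [LinearOrder α] [LinearOrder β] {N : ℕ}

def seqRankCount (x : Fin N → α) (n : Fin N) : ℕ := #{i | i ≤ n ∧ x i ≤ x n}

theorem seqRankCount_mem_Icc (x : Fin N → α) (n : Fin N) :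
    seqRankCount x n ∈ Icc 1 ((n : ℕ) + 1) := by
  refine mem_Icc.2 ⟨card_pos.2 ⟨n, by simp⟩, ?_⟩
  calc seqRankCount x n ≤ #(Iic n) := card_le_card fun i hi => by simpa using (mem_filter.1 hi).2.1
    _ = n + 1 := Fin.card_Iic n

theorem seqRankCount_eq_card_add_one (x : Fin N → α) (n : Fin N) :
    seqRankCount x n = #{j | j < n ∧ x j ≤ x n} + 1 := by
  rw [seqRankCount, ← card_insert_of_notMem (s := {j | j < n ∧ x j ≤ x n}) (a := n) (by simp)]
  congr 1
  ext j
  simp only [mem_filter, mem_univ, true_and, mem_insert, le_iff_lt_or_eq (a := j)]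
  constructor
  · rintro ⟨hj | rfl, hx⟩ <;> simp_all
  · rintro (rfl | ⟨hj, hx⟩) <;> simp_all

theorem seqRankCount_comp_strictMono {g : α → β} (hg : StrictMono g) (x : Fin N → α) :
    seqRankCount (g ∘ x) = seqRankCount x := by
  ext n
  simp [seqRankCount, hg.le_iff_le]

theorem lt_iff_card_lt_seqRankCount {x : Fin N → α} {i n : Fin N} (hin : i < n)
    (hne : x i ≠ x n) : x i < x n ↔ #{j | j < n ∧ x j ≤ x i} < seqRankCount x n := by
  rw [seqRankCount_eq_card_add_one, Nat.lt_succ_iff]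
  constructor
  · intro h
    exact card_le_card fun j hj => by
      rw [mem_filter] at hj ⊢
      exact ⟨hj.1, hj.2.1, hj.2.2.trans h.le⟩
  · intro hcard
    by_contra h
    have hni : x n < x i := lt_of_le_of_ne (not_lt.1 h) hne.symm
    refine hcard.not_gt (card_lt_card ⟨fun j hj => ?_, fun hsub => ?_⟩)
    · rw [mem_filter] at hj ⊢
      exact ⟨hj.1, hj.2.1, hj.2.2.trans hni.le⟩
    · have := hsub (mem_filter.2 ⟨mem_univ i, hin, le_rfl⟩)
      exact (mem_filter.1 this).2.2.not_gt hni

theorem lt_iff_lt_of_seqRankCount_eq {x : Fin N → α} {y : Fin N → β} (hx : Injective x)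
    (hy : Injective y) (h : seqRankCount x = seqRankCount y) (i j : Fin N) :
    x i < x j ↔ y i < y j := by
  have swap : ∀ {i j}, i ≠ j → (x i < x j ↔ y i < y j) → (x j < x i ↔ y j < y i) :=
    fun hij hlt => by
      rw [← not_iff_not, not_lt, not_lt, (hx.ne hij).le_iff_lt, (hy.ne hij).le_iff_lt, hlt]
  have below : ∀ j, ∀ i < j, x i < x j ↔ y i < y j := by
    intro j
    induction j using WellFoundedLT.induction with
    | _ j ih =>
      have hle : ∀ k < j, ∀ i < j, (x k ≤ x i ↔ y k ≤ y i) := by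
        intro k hk i hi
        rcases lt_trichotomy k i with hki | rfl | hik
        · rw [(hx.ne hki.ne).le_iff_lt, (hy.ne hki.ne).le_iff_lt]
          exact ih i hi k hki
        · simp
        · rw [← not_lt, ← not_lt]
          exact not_congr (ih k hk i hik)
      intro i hij
      rw [lt_iff_card_lt_seqRankCount hij (hx.ne hij.ne),
        lt_iff_card_lt_seqRankCount hij (hy.ne hij.ne), h,
        filter_congr fun k _ => and_congr_right fun hk => hle k hk i hij]
  rcases lt_trichotomy i j with hij | rfl | hji
  · exact below j i hij
  · simp
  · exact swap hji.ne (below i j hji)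

theorem seqRankCount_eq_iff_strictMono {x : Fin N → α} (hx : Injective x)
    (σ : Equiv.Perm (Fin N)) : seqRankCount x = seqRankCount σ ↔ StrictMono (x ∘ σ.symm) := by
  constructor
  · intro h a b hab
    simpa using (lt_iff_lt_of_seqRankCount_eq hx σ.injective h _ _).2 (by simpa using hab)
  · intro h
    conv_lhs => rw [show x = (x ∘ σ.symm) ∘ σ by ext; simp]
    exact seqRankCount_comp_strictMono h σ

theorem seqRankCount_perm_injective :
    Injective fun σ : Equiv.Perm (Fin N) => seqRankCount σ := by
  intro σ τ h
  have hmono := ((seqRankCount_eq_iff_strictMono σ.injective τ).1 h).monotone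
  have : σ * τ⁻¹ = 1 := (Equiv.Perm.monotone_iff _).1 (by simpa [Equiv.Perm.inv_def] using hmono)
  exact mul_inv_eq_one.1 this

theorem prod_fin_add_one_eq_factorial : ∏ n : Fin N, ((n : ℕ) + 1) = N ! := by
  rw [Fin.prod_univ_eq_prod_range (· + 1), prod_range_add_one_eq_factorial]

theorem exists_perm_seqRankCount_eq {k : Fin N → ℕ} (hk : ∀ n : Fin N, k n ∈ Icc 1 ((n : ℕ) + 1)) :
    ∃ σ : Equiv.Perm (Fin N), seqRankCount σ = k := by
  have himage : univ.image (fun σ : Equiv.Perm (Fin N) => seqRankCount σ) =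
      Fintype.piFinset fun n : Fin N => Icc 1 ((n : ℕ) + 1) := by
    refine eq_of_subset_of_card_le (fun c hc => ?_) ?_
    · obtain ⟨σ, -, rfl⟩ := mem_image.1 hc
      exact Fintype.mem_piFinset.2 (seqRankCount_mem_Icc σ)
    · rw [card_image_of_injective _ seqRankCount_perm_injective, card_univ, Fintype.card_perm,
        Fintype.card_fin, Fintype.card_piFinset]
      simp [prod_fin_add_one_eq_factorial]
  obtain ⟨σ, -, hσ⟩ := mem_image.1 (himage ▸ Fintype.mem_piFinset.2 hk)
  exact ⟨σ, hσ⟩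

theorem pairwise_disjoint_setOf_strictMono_comp :
    Pairwise (Disjoint on fun σ : Equiv.Perm (Fin N) => {x : Fin N → α | StrictMono (x ∘ σ)}) := by
  intro σ τ hne
  refine Set.disjoint_left.2 fun x (hσ : StrictMono (x ∘ σ)) (hτ : StrictMono (x ∘ τ)) => hne ?_
  have hx : Injective x := by simpa [comp_assoc] using hσ.injective.comp σ.symm.injective
  exact Equiv.ext fun i => hx (congrFun (Tuple.unique_monotone hσ.monotone hτ.monotone) i)

theorem iUnion_setOf_strictMono_comp :
    ⋃ σ : Equiv.Perm (Fin N), {x : Fin N → α | StrictMono (x ∘ σ)} = {x | Injective x} := by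
  ext x
  simp only [Set.mem_iUnion, Set.mem_ofPred_eq]
  refine ⟨fun ⟨σ, hσ⟩ => by simpa [comp_assoc] using hσ.injective.comp σ.symm.injective,
    fun hx => ⟨Tuple.sort x, ?_⟩⟩
  exact (Tuple.monotone_sort x).strictMono_of_injective (hx.comp (Tuple.sort x).injective)

end SeqRankCount

theorem measurePreserving_comp_perm {β : Type*} [MeasurableSpace β] (μ : Measure β)
    [SigmaFinite μ] {N : ℕ} (σ : Equiv.Perm (Fin N)) :
    MeasurePreserving (fun x : Fin N → β => x ∘ σ) (Measure.pi fun _ => μ)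
      (Measure.pi fun _ => μ) := by
  convert measurePreserving_piCongrLeft (fun _ : Fin N => μ) σ.symm using 1
  ext x i
  simp [MeasurableEquiv.coe_piCongrLeft, Equiv.piCongrLeft_apply]

theorem pi_setOf_apply_eq_apply_null {β ι : Type*} [MeasurableSpace β] [MeasurableEq β]
    [Fintype ι] (μ : Measure β) [IsProbabilityMeasure μ] [NullSingletonClass μ] {i j : ι}
    (hij : i ≠ j) : Measure.pi (fun _ : ι => μ) {x | x i = x j} = 0 := by
  have hindep : IndepFun (fun x : ι → β => x i) (fun x => x j) (Measure.pi fun _ => μ) :=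
    (iIndepFun_pi (X := fun _ => id) fun _ => aemeasurable_id).indepFun hij
  rw [indepFun_iff_map_prod_eq_prod_map_map (measurable_pi_apply i).aemeasurable
    (measurable_pi_apply j).aemeasurable, (measurePreserving_eval _ i).map_eq,
    (measurePreserving_eval _ j).map_eq] at hindep
  have : {x : ι → β | x i = x j} = (fun x => (x i, x j)) ⁻¹' Set.diagonal β := rfl
  rw [this, ← Measure.map_apply (by fun_prop) measurableSet_diagonal, hindep,
    Measure.prod_apply measurableSet_diagonal]
  simp [Set.preimage, Set.diagonal]

theorem measurableSet_setOf_strictMono {N : ℕ} : MeasurableSet {x : Fin N → ℝ | StrictMono x} := by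
  simp only [StrictMono, Set.ofPred_forall]
  exact .iInter fun i => .iInter fun j => .iInter fun _ =>
    measurableSet_lt (measurable_pi_apply i) (measurable_pi_apply j)

theorem measurable_seqRankCount {N : ℕ} :
    Measurable (seqRankCount : (Fin N → ℝ) → Fin N → ℕ) := by
  refine measurable_pi_lambda _ fun n => ?_
  simp_rw [seqRankCount, card_filter]
  refine Finset.measurable_sum _ fun i _ => Measurable.ite ?_ measurable_const measurable_const
  rw [Set.ofPred_and]
  exact (MeasurableSet.const _).inter
    (measurableSet_le (measurable_pi_apply i) (measurable_pi_apply n))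

theorem uniformOn_Icc_singleton (n k : ℕ) :
    uniformOn (Set.Icc 1 (n + 1)) {k} = if k ∈ Icc 1 (n + 1) then ((n : ℝ≥0∞) + 1)⁻¹ else 0 := by
  rw [← coe_Icc, ← coe_singleton, uniformOn_apply_finset]
  split_ifs with hk
  · simp [inter_singleton_of_mem hk]
  · simp [inter_singleton_of_notMem hk]

instance isProbabilityMeasure_uniformOn_Icc (n : ℕ) :
    IsProbabilityMeasure (uniformOn (Set.Icc 1 (n + 1) : Set ℕ)) :=
  isProbabilityMeasure_uniformOn (Set.finite_Icc _ _) ⟨1, by simp⟩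

section ProductMeasure

variable {N : ℕ} (μ : Measure ℝ) [IsProbabilityMeasure μ] [NullSingletonClass μ]

theorem pi_setOf_not_injective_null :
    Measure.pi (fun _ : Fin N => μ) {x | ¬ Injective x} = 0 := by
  have : {x : Fin N → ℝ | ¬ Injective x} ⊆ ⋃ i, ⋃ j, ⋃ (_ : i ≠ j), {x | x i = x j} := by
    intro x hx
    simp only [Injective, not_forall] at hx
    obtain ⟨i, j, hij, hne⟩ := hx
    exact Set.mem_iUnion₂.2 ⟨i, j, Set.mem_iUnion.2 ⟨hne, hij⟩⟩
  exact measure_mono_null this <| measure_iUnion_null fun i => measure_iUnion_null fun j =>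
    measure_iUnion_null fun hij => pi_setOf_apply_eq_apply_null μ hij

theorem pi_setOf_strictMono_comp (σ : Equiv.Perm (Fin N)) :
    Measure.pi (fun _ : Fin N => μ) {x | StrictMono (x ∘ σ)} = (N ! : ℝ≥0∞)⁻¹ := by
  set ν := Measure.pi fun _ : Fin N => μ
  have hcell : ∀ τ : Equiv.Perm (Fin N), ν {x | StrictMono (x ∘ τ)} = ν {x | StrictMono x} :=
    fun τ => (measurePreserving_comp_perm μ τ).measure_preimage
      measurableSet_setOf_strictMono.nullMeasurableSet
  have htotal : ∑' τ : Equiv.Perm (Fin N), ν {x | StrictMono (x ∘ τ)} = 1 := by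
    rw [← measure_iUnion pairwise_disjoint_setOf_strictMono_comp
      fun τ => (measurePreserving_comp_perm μ τ).measurable measurableSet_setOf_strictMono,
      iUnion_setOf_strictMono_comp, ← measure_univ (μ := ν)]
    exact measure_congr (ae_eq_univ.2 (pi_setOf_not_injective_null μ))
  rw [tsum_fintype, Finset.sum_congr rfl fun τ _ => hcell τ, sum_const, card_univ,
    Fintype.card_perm, Fintype.card_fin, nsmul_eq_mul] at htotal
  rw [hcell]
  exact ENNReal.eq_inv_of_mul_eq_one_left (by rwa [mul_comm])

theorem pi_setOf_seqRankCount_eq {k : Fin N → ℕ}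
    (hk : ∀ n : Fin N, k n ∈ Icc 1 ((n : ℕ) + 1)) :
    Measure.pi (fun _ : Fin N => μ) {x | seqRankCount x = k} = (N ! : ℝ≥0∞)⁻¹ := by
  obtain ⟨σ, rfl⟩ := exists_perm_seqRankCount_eq hk
  rw [← pi_setOf_strictMono_comp μ σ.symm]
  refine measure_congr ?_
  filter_upwards [compl_mem_ae_iff.2 (pi_setOf_not_injective_null μ)] with x hx
  exact propext (seqRankCount_eq_iff_strictMono (not_not.1 hx) σ)

theorem hasLaw_seqRankCount_pi :
    HasLaw seqRankCount (Measure.pi fun n : Fin N => uniformOn (Set.Icc 1 ((n : ℕ) + 1)))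
      (Measure.pi fun _ : Fin N => μ) where
  aemeasurable := measurable_seqRankCount.aemeasurable
  map_eq := by
    refine Measure.ext_of_singleton fun k => ?_
    rw [Measure.map_apply measurable_seqRankCount (measurableSet_singleton k),
      Measure.pi_singleton]
    simp only [uniformOn_Icc_singleton, prod_ite_zero]
    split_ifs with hk
    · rw [← ENNReal.prod_inv_distrib (fun _ _ _ _ _ => Or.inr (by simp))]
      have hfac : ∏ n : Fin N, ((n : ℝ≥0∞) + 1) = N ! := by
        rw [← prod_fin_add_one_eq_factorial]; push_cast; rfl
      rw [hfac]
      exact pi_setOf_seqRankCount_eq μ fun n => hk n (mem_univ n)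
    · refine measure_mono_null (fun x hx => hk fun n _ => ?_) measure_empty
      rw [← (Set.mem_singleton_iff.1 hx : seqRankCount x = k)]
      exact seqRankCount_mem_Icc x n

end ProductMeasure

theorem iIndepFun_of_forall_fin {Ω β : Type*} [MeasurableSpace Ω] [MeasurableSpace β]
    {P : Measure Ω} {f : ℕ → Ω → β} (h : ∀ N, iIndepFun (fun n : Fin N => f n) P) :
    iIndepFun f P := by
  refine iIndepFun_iff_finset.2 fun s => ?_
  obtain ⟨N, hN⟩ := s.exists_nat_subset_range
  exact (h N).precomp (g := fun i : s => ⟨i, mem_range.1 (hN i.2)⟩)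
    fun i j hij => Subtype.ext (congrArg Fin.val hij)

theorem hasLaw_fin_of_iIndepFun {Ω β : Type*} [MeasurableSpace Ω] [MeasurableSpace β]
    {P : Measure Ω} {X : ℕ → Ω → β} (hmeas : ∀ n, Measurable (X n)) (hindep : iIndepFun X P)
    (hident : ∀ n, P.map (X n) = P.map (X 0)) (N : ℕ) :
    HasLaw (fun ω (i : Fin N) => X i ω) (Measure.pi fun _ => P.map (X 0)) P :=
  (hindep.precomp Fin.val_injective).hasLaw_pi fun i => ⟨(hmeas i).aemeasurable, hident i⟩

theorem seqRank_eq_seqRankCount {Ω : Type*} (X : ℕ → Ω → ℝ) {N n : ℕ} (hn : n < N) (ω : Ω) :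
    seqRank X n ω = seqRankCount (fun i : Fin N => X i ω) ⟨n, hn⟩ / (n + 1 : ℝ) := by
  have hcard : #{i ∈ range (n + 1) | X i ω ≤ X n ω} =
      #{i : Fin N | i ≤ ⟨n, hn⟩ ∧ X i ω ≤ X n ω} := by
    rw [← card_image_of_injective _ Fin.val_injective]
    congr 1
    ext i
    simp only [mem_filter, mem_range, mem_image, mem_univ, true_and, Fin.le_def]
    constructor
    · rintro ⟨hi, hle⟩
      exact ⟨⟨i, by omega⟩, ⟨by simpa using Nat.lt_succ_iff.1 hi, hle⟩, rfl⟩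
    · rintro ⟨j, ⟨hj, hle⟩, rfl⟩
      exact ⟨Nat.lt_succ_of_le hj, hle⟩
  rw [seqRank, sum_boole, hcard, seqRankCount]
  ring

section SeqRank

variable {Ω : Type*} [MeasurableSpace Ω] {P : Measure Ω} {X : ℕ → Ω → ℝ}

theorem hasLaw_seqRankCount [IsProbabilityMeasure P] (hmeas : ∀ n, Measurable (X n))
    (hindep : iIndepFun X P) (hident : ∀ n, P.map (X n) = P.map (X 0))
    (hcont : ∀ x, P.map (X 0) {x} = 0) (N : ℕ) :
    HasLaw (fun ω => seqRankCount fun i : Fin N => X i ω)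
      (Measure.pi fun n : Fin N => uniformOn (Set.Icc 1 ((n : ℕ) + 1))) P :=
  have : IsProbabilityMeasure (P.map (X 0)) :=
    Measure.isProbabilityMeasure_map (hmeas 0).aemeasurable
  have : NullSingletonClass (P.map (X 0)) := ⟨hcont⟩
  (hasLaw_seqRankCount_pi _).comp (hasLaw_fin_of_iIndepFun hmeas hindep hident N)

theorem iIndepFun_seqRank_fin [IsProbabilityMeasure P] {N : ℕ}
    (h : HasLaw (fun ω => seqRankCount fun i : Fin N => X i ω)
      (Measure.pi fun n : Fin N => uniformOn (Set.Icc 1 ((n : ℕ) + 1))) P) :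
    iIndepFun (fun n : Fin N => seqRank X n) P := by
  have hcount := (iIndepFun_iff_hasLaw_pi_pi fun n =>
    (measurePreserving_eval _ n).comp_hasLaw h).2 h
  convert hcount.comp (fun n (c : ℕ) => (c : ℝ) / ((n : ℕ) + 1)) fun _ => measurable_from_nat
    using 2 with n
  exact funext (seqRank_eq_seqRankCount X n.2)

theorem measure_seqRank_eq {n k : ℕ}
    (h : HasLaw (fun ω => seqRankCount fun i : Fin (n + 1) => X i ω)
      (Measure.pi fun m : Fin (n + 1) => uniformOn (Set.Icc 1 ((m : ℕ) + 1))) P)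
    (hk : k ∈ Icc 1 (n + 1)) :
    P {ω | seqRank X n ω = k / (n + 1)} = (n + 1 : ℝ≥0∞)⁻¹ := by
  have hset : {ω | seqRank X n ω = k / (n + 1)} =
      {ω | seqRankCount (fun i : Fin (n + 1) => X i ω) (Fin.last n) = k} := by
    ext ω
    rw [Set.mem_ofPred_eq, Set.mem_ofPred_eq, seqRank_eq_seqRankCount X (lt_add_one n),
      div_left_inj' (by positivity), Nat.cast_inj]
    rfl
  have hlast : HasLaw (fun ω => seqRankCount (fun i : Fin (n + 1) => X i ω) (Fin.last n))
      (uniformOn (Set.Icc 1 (n + 1))) P :=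
    (measurePreserving_eval _ (Fin.last n)).comp_hasLaw h
  rw [hset, hlast.measure_eq (p := (· = k)) .of_discrete, Set.ofPred_eq_eq_singleton,
    uniformOn_Icc_singleton, if_pos hk]

end SeqRank

/-- **Barndorff-Nielsen:** for an i.i.d. sequence with continuous distribution
function, the normalized sequential ranks `ρ 0, ρ 1, …` are independent, and
`ρ n` is uniformly distributed on `{1/(n+1), …, (n+1)/(n+1)}`. -/
theorem seqRank_iIndep_uniform {Ω : Type*} [MeasurableSpace Ω] (P : Measure Ω)
    [IsProbabilityMeasure P] (X : ℕ → Ω → ℝ) (hmeas : ∀ n, Measurable (X n))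
    (hindep : iIndepFun X P)
    (hident : ∀ n, Measure.map (X n) P = Measure.map (X 0) P)
    (hcont : ∀ x : ℝ, Measure.map (X 0) P {x} = 0) :
    iIndepFun (seqRank X) P ∧
    ∀ n : ℕ, ∀ k : ℕ, 1 ≤ k → k ≤ n + 1 →
      P {ω | seqRank X n ω = (k : ℝ) / (n + 1 : ℝ)} = (1 : ENNReal) / (n + 1) := by
  have hlaw := hasLaw_seqRankCount hmeas hindep hident hcont
  refine ⟨iIndepFun_of_forall_fin fun N => iIndepFun_seqRank_fin (hlaw N),
    fun n k hk1 hk2 => ?_⟩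
  rw [one_div]
  exact measure_seqRank_eq (hlaw (n + 1)) (mem_Icc.2 ⟨hk1, hk2⟩)
end

section
/- Let R, S be random variables on [0,1] each uniformly distributed, constructed as the generalized probability integral transforms R = U·F(X) + (1−U)·F(X−), S = V·G(Y) + (1−V)·G(Y−) of a pair (X,Y) with marginal CDFs F, G, where U, V are independent uniforms on (0,1) independent of (X,Y). If X and Y are not independent, then R and S are not independent. Conversely, if X and Y are independent then (R,S) is uniform on [0,1]². -/
open MeasureTheory ProbabilityTheory Set Filter Topology
open scoped ENNReal NNReal

namespace PITaux


/-- toReal monotonicity for finite measures. -/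
lemma trmono {μ : Measure ℝ} [IsFiniteMeasure μ] {s t : Set ℝ} (h : s ⊆ t) :
    (μ s).toReal ≤ (μ t).toReal :=
  ENNReal.toReal_mono (measure_ne_top μ t) (measure_mono h)

/-- The set of points to the right of `x` where the CDF has not increased is null. -/
lemma flat_null (μ : Measure ℝ) [IsFiniteMeasure μ] (x : ℝ) :
    μ {t | x < t ∧ μ (Iic t) ≤ μ (Iic x)} = 0 := by
  set A : Set ℝ := {t | x < t ∧ μ (Iic t) ≤ μ (Iic x)} with hA
  have hIoc : ∀ t ∈ A, μ (Ioc x t) = 0 := by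
    rintro t ⟨hxt, hle⟩
    have h1 : Iic x ⊆ Iic t := Iic_subset_Iic.2 hxt.le
    have := measure_diff h1 nullMeasurableSet_Iic (measure_ne_top μ _)
    rw [Iic_sdiff_Iic] at this
    rw [this]
    exact tsub_eq_zero_of_le hle
  set T : Set ℝ := ((↑) '' {q : ℚ | (q : ℝ) ∈ A}) ∪ {t | IsGreatest A t} with hT
  have hTc : T.Countable := by
    refine Countable.union (Countable.image (Set.to_countable _) _) ?_
    exact Set.Subsingleton.countable (fun a ha b hb => IsGreatest.unique ha hb)
  have hcover : A ⊆ ⋃ t ∈ T, Ioc x t := by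
    intro t ht
    by_cases hg : IsGreatest A t
    · exact mem_biUnion (Or.inr hg) ⟨ht.1, le_rfl⟩
    · have : ∃ s ∈ A, t < s := by
        by_contra hcon
        push_neg at hcon
        exact hg ⟨ht, fun s hs => hcon s hs⟩
      obtain ⟨s, hs, hts⟩ := this
      obtain ⟨q, hq1, hq2⟩ := exists_rat_btwn hts
      have hqA : (q : ℝ) ∈ A := ⟨ht.1.trans hq1, le_trans (measure_mono (Iic_subset_Iic.2 hq2.le)) hs.2⟩
      exact mem_biUnion (Or.inl ⟨q, hqA, rfl⟩) ⟨ht.1, hq1.le⟩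
  refine measure_mono_null hcover ?_
  rw [measure_biUnion_null_iff hTc]
  rintro t ht
  rcases ht with ⟨q, hq, rfl⟩ | hg
  · exact hIoc _ hq
  · exact hIoc _ hg.1




lemma trmono' {μ : Measure ℝ} [IsFiniteMeasure μ] {s t : Set ℝ} (h : s ⊆ t) :
    (μ s).toReal ≤ (μ t).toReal :=
  ENNReal.toReal_mono (measure_ne_top μ t) (measure_mono h)

variable {Ω : Type*} [MeasurableSpace Ω]

/-- a.s. `U ∈ (0,1)`. -/
lemma unif_ae (P : Measure Ω) [IsProbabilityMeasure P] {U : Ω → ℝ} (hU : Measurable U)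
    (hUunif : Measure.map U P = volume.restrict (Set.Ioo (0 : ℝ) 1)) :
    ∀ᵐ ω ∂P, U ω ∈ Set.Ioo (0 : ℝ) 1 := by
  have h1 : P (U ⁻¹' (Set.Ioo (0:ℝ) 1)) = 1 := by
    rw [← Measure.map_apply hU measurableSet_Ioo, hUunif,
      Measure.restrict_apply measurableSet_Ioo, Set.inter_self, Real.volume_Ioo]
    norm_num
  have h2 : P (U ⁻¹' (Set.Ioo (0:ℝ) 1))ᶜ = 0 := by
    rw [measure_compl (hU measurableSet_Ioo) (measure_ne_top P _), h1, measure_univ, tsub_self]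
  exact mem_ae_iff.2 h2

/-- The key a.e. event identity `{X ≤ x} = {R ≤ F x}`. -/
lemma pit_event (P : Measure Ω) [IsProbabilityMeasure P] {X U : Ω → ℝ}
    (hX : Measurable X) (hU : Measurable U)
    (hUunif : Measure.map U P = volume.restrict (Set.Ioo (0 : ℝ) 1))
    (F Fm : ℝ → ℝ)
    (hF : ∀ x, F x = ((Measure.map X P) (Set.Iic x)).toReal)
    (hFm : ∀ x, Fm x = ((Measure.map X P) (Set.Iio x)).toReal)
    (R : Ω → ℝ)
    (hR : ∀ ω, R ω = U ω * F (X ω) + (1 - U ω) * Fm (X ω)) (x : ℝ) :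
    X ⁻¹' (Set.Iic x) =ᵐ[P] R ⁻¹' (Set.Iic (F x)) := by
  set μ := Measure.map X P with hμ
  haveI : IsProbabilityMeasure μ := Measure.isProbabilityMeasure_map hX.aemeasurable
  -- the flat set
  set A : Set ℝ := {t | x < t ∧ μ (Iic t) ≤ μ (Iic x)} with hA
  have hAmeas : MeasurableSet A := by
    have h1 : MeasurableSet {t : ℝ | x < t} := measurableSet_Ioi
    have hmono : Monotone (fun t => μ (Iic t)) := fun a b hab => measure_mono (Iic_subset_Iic.2 hab)
    have h2 : MeasurableSet {t : ℝ | μ (Iic t) ≤ μ (Iic x)} := hmono.measurable measurableSet_Iic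
    exact h1.inter h2
  have hAnull : P (X ⁻¹' A) = 0 := by
    rw [← Measure.map_apply hX hAmeas, ← hμ]
    exact flat_null μ x
  have hXA : ∀ᵐ ω ∂P, X ω ∉ A := by
    rw [ae_iff]; simp only [not_not]; exact hAnull
  have hUae := unif_ae P hU hUunif
  rw [Filter.eventuallyEq_set]
  filter_upwards [hXA, hUae] with ω hωA hωU
  simp only [Set.mem_preimage, Set.mem_Iic]
  obtain ⟨hu0, hu1⟩ := hωU
  have hFmF : Fm (X ω) ≤ F (X ω) := by
    rw [hF, hFm]; exact trmono' Iio_subset_Iic_self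
  constructor
  · intro hXx
    have hFF : F (X ω) ≤ F x := by
      rw [hF, hF]; exact trmono' (Iic_subset_Iic.2 hXx)
    rw [hR]; nlinarith
  · intro hRr
    by_contra hXx
    push_neg at hXx
    have hFxFm : F x ≤ Fm (X ω) := by
      rw [hF, hFm]; exact trmono' (fun t (ht : t ≤ x) => lt_of_le_of_lt ht hXx)
    rcases lt_or_eq_of_le hFmF with hlt | heq
    · -- jump at X ω : R > Fm (X ω) ≥ F x
      rw [hR] at hRr; nlinarith
    · -- no jump: F x < F (X ω) since X ω ∉ A
      have hnotle : ¬ μ (Iic (X ω)) ≤ μ (Iic x) := fun h => hωA ⟨hXx, h⟩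
      have hlt2 : F x < F (X ω) := by
        rw [hF, hF]
        exact ENNReal.toReal_strict_mono (measure_ne_top μ _) (lt_of_not_ge hnotle)
      rw [hR] at hRr; nlinarith
  

/-- The generalized probability integral transform is uniform on `[0,1]`. -/
lemma pit_map (P : Measure Ω) [IsProbabilityMeasure P] {U X : Ω → ℝ}
    (hU : Measurable U) (hX : Measurable X)
    (hUunif : Measure.map U P = volume.restrict (Set.Ioo (0 : ℝ) 1))
    (hUX : IndepFun U X P)
    (F Fm : ℝ → ℝ)
    (hF : ∀ x, F x = ((Measure.map X P) (Set.Iic x)).toReal)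
    (hFm : ∀ x, Fm x = ((Measure.map X P) (Set.Iio x)).toReal)
    (R : Ω → ℝ)
    (hR : ∀ ω, R ω = U ω * F (X ω) + (1 - U ω) * Fm (X ω)) :
    Measure.map R P = volume.restrict (Set.Icc (0 : ℝ) 1) := by
  set μ := Measure.map X P with hμ
  haveI : IsProbabilityMeasure μ := Measure.isProbabilityMeasure_map hX.aemeasurable
  -- basic facts about F, Fm
  have fact1 : Monotone F := fun a b hab => by
    rw [hF, hF]; exact trmono' (Iic_subset_Iic.2 hab)
  have fact1m : Monotone Fm := fun a b hab => by
    rw [hFm, hFm]; exact trmono' (Iio_subset_Iio hab)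
  have fact2 : ∀ a b : ℝ, a < b → F a ≤ Fm b := fun a b hab => by
    rw [hF, hFm]; exact trmono' (fun t (ht : t ≤ a) => lt_of_le_of_lt ht hab)
  have fact3 : ∀ t, Fm t ≤ F t := fun t => by
    rw [hF, hFm]; exact trmono' Iio_subset_Iic_self
  have fact4 : ∀ t, 0 ≤ Fm t := fun t => by rw [hFm]; exact ENNReal.toReal_nonneg
  have fact4' : ∀ t, 0 ≤ F t := fun t => le_trans (fact4 t) (fact3 t)
  have fact5 : ∀ t, F t ≤ 1 := fun t => by
    rw [hF]
    have := trmono' (μ := μ) (subset_univ (Iic t))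
    rwa [measure_univ, ENNReal.toReal_one] at this
  have hofF : ∀ t, μ (Iic t) = ENNReal.ofReal (F t) := fun t => by
    rw [hF, ENNReal.ofReal_toReal (measure_ne_top μ _)]
  have hofFm : ∀ t, μ (Iio t) = ENNReal.ofReal (Fm t) := fun t => by
    rw [hFm, ENNReal.ofReal_toReal (measure_ne_top μ _)]
  have hFmeas : Measurable F := fact1.measurable
  have hFmmeas : Measurable Fm := fact1m.measurable
  have hRmeas : Measurable R := by
    have : R = fun ω => U ω * F (X ω) + (1 - U ω) * Fm (X ω) := funext hR
    rw [this]
    exact (hU.mul (hFmeas.comp hX)).add ((measurable_const.sub hU).mul (hFmmeas.comp hX))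
  haveI : IsProbabilityMeasure (Measure.map R P) :=
    Measure.isProbabilityMeasure_map hRmeas.aemeasurable
  have hUae := unif_ae P hU hUunif
  refine Measure.ext_of_Iic _ _ (fun r => ?_)
  rw [Measure.map_apply hRmeas measurableSet_Iic, Measure.restrict_apply measurableSet_Iic]
  rcases lt_or_ge r 0 with hr0 | hr0
  · -- r < 0
    have h1 : P (R ⁻¹' Iic r) = 0 := by
      rw [measure_eq_zero_iff_ae_notMem]
      filter_upwards [hUae] with ω hω
      simp only [mem_preimage, mem_Iic, not_le]
      obtain ⟨h0, h1'⟩ := hω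
      rw [hR]
      nlinarith [fact4 (X ω), fact4' (X ω), fact3 (X ω)]
    have h2 : Iic r ∩ Icc (0:ℝ) 1 = ∅ := by
      rw [eq_empty_iff_forall_notMem]
      rintro t ⟨ht1, ht2, -⟩
      simp only [mem_Iic] at ht1
      linarith
    rw [h1, h2, measure_empty]
  rcases lt_or_ge r 1 with hr1 | hr1
  swap
  · -- r ≥ 1
    have hsub : Iic r ∩ Icc (0:ℝ) 1 = Icc 0 1 :=
      inter_eq_right.2 (fun t ht => le_trans ht.2 hr1)
    rw [hsub, Real.volume_Icc]
    have h1 : R ⁻¹' Iic r =ᵐ[P] (univ : Set Ω) := by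
      rw [eventuallyEq_univ]
      refine Filter.mem_of_superset hUae fun ω hω => ?_
      simp only [mem_preimage, mem_Iic]
      obtain ⟨h0, h1⟩ := hω
      rw [hR]
      nlinarith [fact3 (X ω), fact5 (X ω), fact4 (X ω)]
    rw [measure_congr h1, measure_univ]
    norm_num
  · -- 0 ≤ r < 1
    have hsub : Iic r ∩ Icc (0:ℝ) 1 = Icc 0 r := by
      ext t; simp only [mem_inter_iff, mem_Iic, mem_Icc]
      exact ⟨fun ⟨h1, h2, _⟩ => ⟨h2, h1⟩, fun ⟨h1, h2⟩ => ⟨h2, h1, by linarith⟩⟩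
    rw [hsub, Real.volume_Icc, sub_zero]
    by_cases hAex : ∃ x0, Fm x0 ≤ r ∧ r < F x0
    · obtain ⟨x0, hx1, hx2⟩ := hAex
      have hgap : 0 < F x0 - Fm x0 := by linarith
      set c := (r - Fm x0) / (F x0 - Fm x0) with hc
      have hc0 : 0 ≤ c := div_nonneg (by linarith) hgap.le
      have hc1 : c < 1 := (div_lt_one hgap).2 (by linarith)
      have hae : R ⁻¹' Iic r =ᵐ[P]
          ((X ⁻¹' Iio x0 ∪ (X ⁻¹' {x0} ∩ U ⁻¹' Iic c)) : Set Ω) := by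
        rw [eventuallyEq_set]
        filter_upwards [hUae] with ω hω
        obtain ⟨hu0, hu1⟩ := hω
        simp only [mem_preimage, mem_Iic, mem_union, mem_inter_iff, mem_Iio, mem_singleton_iff]
        rcases lt_trichotomy (X ω) x0 with h | h | h
        · refine iff_of_true ?_ (Or.inl h)
          rw [hR]
          nlinarith [fact2 (X ω) x0 h, fact3 (X ω), fact4 (X ω)]
        · rw [hR, h]
          have hrw : U ω * F x0 + (1 - U ω) * Fm x0 = Fm x0 + U ω * (F x0 - Fm x0) := by ring
          rw [hrw]
          constructor
          · intro h'
            refine Or.inr ⟨rfl, ?_⟩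
            rw [hc, le_div_iff₀ hgap]; linarith
          · rintro (h' | ⟨-, h'⟩)
            · exact absurd h' (lt_irrefl _ ∘ (h ▸ ·))
            · rw [hc, le_div_iff₀ hgap] at h'; linarith
        · refine iff_of_false ?_ ?_
          · rw [hR]; push_neg
            nlinarith [fact2 x0 (X ω) h, fact3 (X ω), fact4 (X ω)]
          · rintro (h' | ⟨h', -⟩)
            · exact lt_asymm h h'
            · exact h.ne' h'
      rw [measure_congr hae]
      have hdisj : Disjoint (X ⁻¹' Iio x0) (X ⁻¹' {x0} ∩ U ⁻¹' Iic c) :=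
        Set.disjoint_left.2 fun ω h1 h2 => absurd (h2.1 : X ω = x0) (ne_of_lt h1)
      rw [measure_union hdisj ((hX (measurableSet_singleton x0)).inter (hU measurableSet_Iic))]
      have e1 : P (X ⁻¹' Iio x0) = ENNReal.ofReal (Fm x0) := by
        rw [← Measure.map_apply hX measurableSet_Iio, ← hμ, hofFm]
      have e2 : P (X ⁻¹' {x0} ∩ U ⁻¹' Iic c) = ENNReal.ofReal (r - Fm x0) := by
        rw [inter_comm,
          hUX.measure_inter_preimage_eq_mul _ _ measurableSet_Iic (measurableSet_singleton x0)]
        have eU : P (U ⁻¹' Iic c) = ENNReal.ofReal c := by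
          rw [← Measure.map_apply hU measurableSet_Iic, hUunif,
            Measure.restrict_apply measurableSet_Iic]
          have : Iic c ∩ Ioo (0:ℝ) 1 = Ioc 0 c := by
            ext u
            simp only [mem_inter_iff, mem_Iic, mem_Ioo, mem_Ioc]
            exact ⟨fun ⟨h1, h2, h3⟩ => ⟨h2, h1⟩,
                   fun ⟨h1, h2⟩ => ⟨h2, h1, lt_of_le_of_lt h2 hc1⟩⟩
          rw [this, Real.volume_Ioc, sub_zero]
        have eX : P (X ⁻¹' {x0}) = ENNReal.ofReal (F x0 - Fm x0) := by
          rw [← Measure.map_apply hX (measurableSet_singleton x0), ← hμ]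
          have hd : ({x0} : Set ℝ) = Iic x0 \ Iio x0 := by
            ext t
            simp only [mem_singleton_iff, mem_diff, mem_Iic, mem_Iio, not_lt]
            exact ⟨fun h => ⟨h.le, h.ge⟩, fun ⟨h1, h2⟩ => le_antisymm h1 h2⟩
          rw [hd, measure_diff Iio_subset_Iic_self nullMeasurableSet_Iio (measure_ne_top μ _),
            hofF, hofFm, ← ENNReal.ofReal_sub _ (fact4 x0)]
        rw [eU, eX, ← ENNReal.ofReal_mul hc0, hc, div_mul_cancel₀ _ hgap.ne']
      rw [e1, e2, ← ENNReal.ofReal_add (fact4 x0) (by linarith)]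
      ring_nf
    · push_neg at hAex
      -- hAex : ∀ x, Fm x ≤ r → F x ≤ r
      set S := {t : ℝ | F t ≤ r} with hS
      have hSmeas : MeasurableSet S := hFmeas measurableSet_Iic
      have hae : R ⁻¹' Iic r =ᵐ[P] X ⁻¹' S := by
        rw [eventuallyEq_set]
        filter_upwards [hUae] with ω hω
        obtain ⟨hu0, hu1⟩ := hω
        simp only [mem_preimage, mem_Iic, hS, mem_setOf_eq]
        rcases le_or_gt (F (X ω)) r with h | h
        · refine iff_of_true ?_ h
          rw [hR]; nlinarith [fact3 (X ω)]
        · refine iff_of_false ?_ (not_le.2 h)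
          have hFm' : r < Fm (X ω) := lt_of_not_ge fun hle => absurd (hAex _ hle) (not_le.2 h)
          rw [hR]; push_neg
          nlinarith [fact3 (X ω)]
      rw [measure_congr hae, ← Measure.map_apply hX hSmeas, ← hμ]
      -- show μ S = ofReal r
      have htop : Tendsto F atTop (𝓝 1) := by
        have h1 := tendsto_measure_Iic_atTop μ
        rw [measure_univ] at h1
        have h2 := (ENNReal.tendsto_toReal (by norm_num : (1:ℝ≥0∞) ≠ ⊤)).comp h1
        rw [ENNReal.toReal_one] at h2
        have : (fun x => F x) = ENNReal.toReal ∘ fun x => μ (Iic x) := by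
          funext t; simp [Function.comp, hF]
        rwa [← this] at h2
      obtain ⟨b, hbr⟩ : ∃ b, r < F b := (htop.eventually (eventually_gt_nhds hr1)).exists
      have hSb : S ⊆ Iio b := fun t ht => by
        by_contra hbt
        simp only [mem_Iio, not_lt] at hbt
        exact absurd (le_trans (fact1 hbt) ht) (not_le.2 hbr)
      by_cases hSne : S.Nonempty
      · set t0 := sSup S with ht0def
        have hbdd : BddAbove S := ⟨b, fun s hs => (hSb hs).le⟩
        have hub : ∀ s ∈ S, s ≤ t0 := fun s hs => le_csSup hbdd hs
        have hIio : Iio t0 ⊆ S := fun y hy => by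
          obtain ⟨s, hs, hys⟩ := exists_lt_of_lt_csSup hSne hy
          exact le_trans (fact1 hys.le) hs
        have ht0 : t0 ∈ S := by
          by_contra ht0
          have key : μ (Iio t0) ≤ ENNReal.ofReal r := by
            have hcov : Iio t0 = ⋃ n : ℕ, Iic (t0 - 1/(n+1)) := by
              ext y
              simp only [mem_Iio, mem_iUnion, mem_Iic]
              constructor
              · intro hy
                obtain ⟨n, hn⟩ := exists_nat_one_div_lt (sub_pos.2 hy)
                exact ⟨n, by push_cast at hn ⊢; linarith⟩
              · rintro ⟨n, hn⟩
                have : (0:ℝ) < 1/(n+1) := by positivity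
                linarith
            rw [hcov]
            have hmono2 : Monotone (fun n : ℕ => Iic (t0 - 1/(n+1 : ℝ))) := by
              intro a b hab
              apply Iic_subset_Iic.2
              have hab' : (a:ℝ) ≤ b := Nat.cast_le.2 hab
              have : (1:ℝ)/(b+1) ≤ 1/(a+1) :=
                one_div_le_one_div_of_le (by positivity) (by linarith)
              linarith
            have hlim := tendsto_measure_iUnion_atTop (μ := μ) hmono2
            refine le_of_tendsto hlim (Eventually.of_forall fun n => ?_)
            have hmem : (t0 - 1/(n+1 : ℝ)) ∈ S := hIio (by
              have : (0:ℝ) < 1/(n+1) := by positivity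
              simp only [mem_Iio]; linarith)
            simp only [Function.comp]
            rw [hofF]
            exact ENNReal.ofReal_le_ofReal hmem
          have h1 : r < Fm t0 := lt_of_not_ge fun hle => ht0 (hAex t0 hle)
          have h2 : Fm t0 ≤ r := by
            have h3 := ENNReal.toReal_mono ENNReal.ofReal_ne_top key
            rwa [ENNReal.toReal_ofReal hr0, ← hFm] at h3
          linarith
        have hSeq : S = Iic t0 :=
          subset_antisymm (fun s hs => hub s hs) (fun y hy => le_trans (fact1 hy) ht0)
        have hFt0 : F t0 = r := by
          refine le_antisymm ht0 ?_
          by_contra hlt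
          push_neg at hlt
          have hanti : Antitone (fun n : ℕ => Iic (t0 + 1/(n+1 : ℝ))) := by
            intro a b hab
            apply Iic_subset_Iic.2
            have hab' : (a:ℝ) ≤ b := Nat.cast_le.2 hab
            have : (1:ℝ)/(b+1) ≤ 1/(a+1) :=
              one_div_le_one_div_of_le (by positivity) (by linarith)
            linarith
          have hint : (⋂ n : ℕ, Iic (t0 + 1/(n+1 : ℝ))) = Iic t0 := by
            ext y
            simp only [mem_iInter, mem_Iic]
            constructor
            · intro h
              by_contra hy
              push_neg at hy
              obtain ⟨n, hn⟩ := exists_nat_one_div_lt (sub_pos.2 hy)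
              have := h n
              push_cast at hn
              linarith
            · intro h n
              have : (0:ℝ) < 1/(n+1) := by positivity
              linarith
          have hseq := tendsto_measure_iInter_atTop (μ := μ)
            (fun n => nullMeasurableSet_Iic) hanti ⟨0, measure_ne_top μ _⟩
          rw [hint] at hseq
          have hseq2 : Tendsto (fun n : ℕ => F (t0 + 1/(n+1))) atTop (𝓝 (F t0)) := by
            have h2 := (ENNReal.tendsto_toReal (measure_ne_top μ (Iic t0))).comp hseq
            have : (fun n : ℕ => F (t0 + 1/(n+1))) =
                ENNReal.toReal ∘ (μ ∘ fun n : ℕ => Iic (t0 + 1/(n+1 : ℝ))) := by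
              funext n; simp [Function.comp, hF]
            rw [this, hF]
            exact h2
          have hge : r ≤ F t0 := by
            refine ge_of_tendsto hseq2 (Eventually.of_forall fun n => ?_)
            have hnotmem : (t0 + 1/(n+1 : ℝ)) ∉ S := by
              rw [hSeq]
              simp only [mem_Iic, not_le]
              have : (0:ℝ) < 1/(n+1) := by positivity
              linarith
            exact le_of_lt (lt_of_not_ge hnotmem)
          linarith
        rw [hSeq, hofF, hFt0]
      · rw [not_nonempty_iff_eq_empty] at hSne
        have hr0' : r ≤ 0 := by
          have hFb : ∀ t, r < Fm t := fun t => lt_of_not_ge fun hle => by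
            have := hAex t hle
            rw [eq_empty_iff_forall_notMem] at hSne
            exact hSne t this
          have hbot : Tendsto (fun x : ℝ => μ (Iic x)) atBot (𝓝 0) := by
            have h0 : (⋂ x : ℝ, Iic x) = (∅ : Set ℝ) := by
              rw [eq_empty_iff_forall_notMem]
              intro y hy
              simp only [mem_iInter, mem_Iic] at hy
              have := hy (y - 1)
              linarith
            have := tendsto_measure_iInter_atBot (μ := μ)
              (fun x => nullMeasurableSet_Iic) (fun a b hab => Iic_subset_Iic.2 hab)
              ⟨0, measure_ne_top μ _⟩
            rw [h0, measure_empty] at this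
            exact this
          have hreal : Tendsto F atBot (𝓝 0) := by
            have h2 := (ENNReal.tendsto_toReal (by norm_num : (0:ℝ≥0∞) ≠ ⊤)).comp hbot
            rw [ENNReal.toReal_zero] at h2
            have : F = ENNReal.toReal ∘ fun x : ℝ => μ (Iic x) := by
              funext t; simp [Function.comp, hF]
            rwa [← this] at h2
          exact ge_of_tendsto hreal
            (Eventually.of_forall fun t => le_of_lt (lt_of_lt_of_le (hFb t) (fact3 t)))
        have hr00 : r = 0 := le_antisymm hr0' hr0
        rw [hSne, measure_empty, hr00, ENNReal.ofReal_zero]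



end PITaux

open MeasureTheory ProbabilityTheory

/-- **Generalized probability integral transform and independence.**
Let `(X, Y)` have marginal CDFs `F, G` (with left limits `F⁻, G⁻`), and let
`U, V` be uniform on `(0,1)`, independent of each other and of `(X, Y)`.  Put
`R = U·F(X) + (1-U)·F(X⁻)` and `S = V·G(Y) + (1-V)·G(Y⁻)`.  If `X` and `Y` are
not independent then `R` and `S` are not independent; conversely, if `X` and
`Y` are independent then `(R, S)` is uniform on `[0,1]²`. -/
theorem pit_independence {Ω : Type*} [MeasurableSpace Ω] (P : Measure Ω)
    [IsProbabilityMeasure P] (X Y U V : Ω → ℝ)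
    (hX : Measurable X) (hY : Measurable Y) (hU : Measurable U) (hV : Measurable V)
    (hUunif : Measure.map U P = volume.restrict (Set.Ioo (0 : ℝ) 1))
    (hVunif : Measure.map V P = volume.restrict (Set.Ioo (0 : ℝ) 1))
    (hUV : IndepFun U V P)
    (hUVXY : IndepFun (fun ω => (U ω, V ω)) (fun ω => (X ω, Y ω)) P)
    (F Fm G Gm : ℝ → ℝ)
    (hF : ∀ x, F x = ((Measure.map X P) (Set.Iic x)).toReal)
    (hFm : ∀ x, Fm x = ((Measure.map X P) (Set.Iio x)).toReal)
    (hG : ∀ y, G y = ((Measure.map Y P) (Set.Iic y)).toReal)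
    (hGm : ∀ y, Gm y = ((Measure.map Y P) (Set.Iio y)).toReal)
    (R S : Ω → ℝ)
    (hR : ∀ ω, R ω = U ω * F (X ω) + (1 - U ω) * Fm (X ω))
    (hS : ∀ ω, S ω = V ω * G (Y ω) + (1 - V ω) * Gm (Y ω)) :
    (¬ IndepFun X Y P → ¬ IndepFun R S P) ∧
    (IndepFun X Y P →
      Measure.map (fun ω => (R ω, S ω)) P =
        volume.restrict (Set.Icc (0 : ℝ) 1 ×ˢ Set.Icc (0 : ℝ) 1)) := by
  have hUX : IndepFun U X P := hUVXY.comp measurable_fst measurable_fst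
  have hVY : IndepFun V Y P := hUVXY.comp measurable_snd measurable_snd
  -- measurability of F, Fm, G, Gm and R, S
  have hFmono : Monotone F := fun a b hab => by
    rw [hF, hF]
    exact PITaux.trmono' (Set.Iic_subset_Iic.2 hab)
  have hFmmono : Monotone Fm := fun a b hab => by
    rw [hFm, hFm]
    exact PITaux.trmono' (Set.Iio_subset_Iio hab)
  have hGmono : Monotone G := fun a b hab => by
    rw [hG, hG]
    exact PITaux.trmono' (Set.Iic_subset_Iic.2 hab)
  have hGmmono : Monotone Gm := fun a b hab => by
    rw [hGm, hGm]
    exact PITaux.trmono' (Set.Iio_subset_Iio hab)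
  have hRmeas : Measurable R := by
    have : R = fun ω => U ω * F (X ω) + (1 - U ω) * Fm (X ω) := funext hR
    rw [this]
    exact (hU.mul ((hFmono.measurable).comp hX)).add
      ((measurable_const.sub hU).mul ((hFmmono.measurable).comp hX))
  have hSmeas : Measurable S := by
    have : S = fun ω => V ω * G (Y ω) + (1 - V ω) * Gm (Y ω) := funext hS
    rw [this]
    exact (hV.mul ((hGmono.measurable).comp hY)).add
      ((measurable_const.sub hV).mul ((hGmmono.measurable).comp hY))
  constructor
  · -- Part 1
    intro hnXY hRS
    apply hnXY
    have e1 : ∀ a, X ⁻¹' (Set.Iic a) =ᵐ[P] R ⁻¹' (Set.Iic (F a)) :=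
      PITaux.pit_event P hX hU hUunif F Fm hF hFm R hR
    have e2 : ∀ b, Y ⁻¹' (Set.Iic b) =ᵐ[P] S ⁻¹' (Set.Iic (G b)) :=
      PITaux.pit_event P hY hV hVunif G Gm hG hGm S hS
    have hgen : ∀ (Z : Ω → ℝ), MeasurableSpace.comap Z inferInstance =
        MeasurableSpace.generateFrom (Set.preimage Z '' Set.range Set.Iic) := by
      intro Z
      conv_lhs => rw [BorelSpace.measurable_eq (α := ℝ), borel_eq_generateFrom_Iic ℝ,
        MeasurableSpace.comap_generateFrom]
    have hpi : ∀ (Z : Ω → ℝ), IsPiSystem (Set.preimage Z '' Set.range Set.Iic) := by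
      rintro Z _ ⟨_, ⟨a, rfl⟩, rfl⟩ _ ⟨_, ⟨b, rfl⟩, rfl⟩ -
      exact ⟨Set.Iic (a ⊓ b), Set.mem_range_self _,
        by rw [← Set.Iic_inter_Iic, Set.preimage_inter]⟩
    have key : IndepSets (Set.preimage X '' Set.range Set.Iic)
        (Set.preimage Y '' Set.range Set.Iic) P := by
      rw [ProbabilityTheory.IndepSets_iff]
      rintro s t ⟨_, ⟨a, rfl⟩, rfl⟩ ⟨_, ⟨b, rfl⟩, rfl⟩
      calc P (X ⁻¹' Set.Iic a ∩ Y ⁻¹' Set.Iic b)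
          = P (R ⁻¹' Set.Iic (F a) ∩ S ⁻¹' Set.Iic (G b)) :=
            measure_congr ((e1 a).inter (e2 b))
        _ = P (R ⁻¹' Set.Iic (F a)) * P (S ⁻¹' Set.Iic (G b)) :=
            hRS.measure_inter_preimage_eq_mul _ _ measurableSet_Iic measurableSet_Iic
        _ = P (X ⁻¹' Set.Iic a) * P (Y ⁻¹' Set.Iic b) := by
            rw [measure_congr (e1 a), measure_congr (e2 b)]
    have : Indep (MeasurableSpace.comap X inferInstance)
        (MeasurableSpace.comap Y inferInstance) P :=
      IndepSets.indep hX.comap_le hY.comap_le (hpi X) (hpi Y) (hgen X) (hgen Y) key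
    exact this
  · -- Part 2
    intro hXY
    -- independence of the pairs (U, X) and (V, Y)
    have hpair : IndepFun (fun ω => (U ω, X ω)) (fun ω => (V ω, Y ω)) P := by
      have hmUX : Measurable (fun ω => (U ω, X ω)) := hU.prodMk hX
      have hmVY : Measurable (fun ω => (V ω, Y ω)) := hV.prodMk hY
      have hgen2 : ∀ (W Z : Ω → ℝ), MeasurableSpace.comap (fun ω => (W ω, Z ω)) inferInstance =
          MeasurableSpace.generateFrom (Set.preimage (fun ω => (W ω, Z ω)) ''
            (Set.image2 (· ×ˢ ·) {s : Set ℝ | MeasurableSet s} {t : Set ℝ | MeasurableSet t})) := by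
        intro W Z
        conv_lhs => rw [← generateFrom_prod, MeasurableSpace.comap_generateFrom]
      have hpi2 : ∀ (W Z : Ω → ℝ), IsPiSystem (Set.preimage (fun ω => (W ω, Z ω)) ''
          (Set.image2 (· ×ˢ ·) {s : Set ℝ | MeasurableSet s} {t : Set ℝ | MeasurableSet t})) :=
        fun W Z => isPiSystem_prod.comap _
      have key : IndepSets
          (Set.preimage (fun ω => (U ω, X ω)) ''
            (Set.image2 (· ×ˢ ·) {s : Set ℝ | MeasurableSet s} {t : Set ℝ | MeasurableSet t}))
          (Set.preimage (fun ω => (V ω, Y ω)) ''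
            (Set.image2 (· ×ˢ ·) {s : Set ℝ | MeasurableSet s} {t : Set ℝ | MeasurableSet t}))
          P := by
        rw [ProbabilityTheory.IndepSets_iff]
        rintro s t ⟨_, ⟨A, hA, C, hC, rfl⟩, rfl⟩ ⟨_, ⟨B, hB, D, hD, rfl⟩, rfl⟩
        simp only [Set.mem_setOf_eq] at hA hB hC hD
        rw [Set.mk_preimage_prod, Set.mk_preimage_prod]
        have hre : U ⁻¹' A ∩ X ⁻¹' C ∩ (V ⁻¹' B ∩ Y ⁻¹' D) =
            (fun ω => (U ω, V ω)) ⁻¹' (A ×ˢ B) ∩ (fun ω => (X ω, Y ω)) ⁻¹' (C ×ˢ D) := by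
          rw [Set.mk_preimage_prod, Set.mk_preimage_prod]
          ext ω
          simp only [Set.mem_inter_iff, Set.mem_preimage]
          tauto
        rw [hre, hUVXY.measure_inter_preimage_eq_mul _ _ ((hA : MeasurableSet A).prod (hB : MeasurableSet B)) ((hC : MeasurableSet C).prod (hD : MeasurableSet D)),
          Set.mk_preimage_prod, Set.mk_preimage_prod,
          hUV.measure_inter_preimage_eq_mul _ _ (hA : MeasurableSet A) (hB : MeasurableSet B),
          hXY.measure_inter_preimage_eq_mul _ _ (hC : MeasurableSet C) (hD : MeasurableSet D),
          hUX.measure_inter_preimage_eq_mul _ _ (hA : MeasurableSet A) (hC : MeasurableSet C),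
          hVY.measure_inter_preimage_eq_mul _ _ (hB : MeasurableSet B) (hD : MeasurableSet D)]
        ring
      have : Indep (MeasurableSpace.comap (fun ω => (U ω, X ω)) inferInstance)
          (MeasurableSpace.comap (fun ω => (V ω, Y ω)) inferInstance) P :=
        IndepSets.indep hmUX.comap_le hmVY.comap_le (hpi2 U X) (hpi2 V Y)
          (hgen2 U X) (hgen2 V Y) key
      exact this
    -- R, S are independent
    have hRS : IndepFun R S P := by
      have hφ : Measurable (fun p : ℝ × ℝ => p.1 * F p.2 + (1 - p.1) * Fm p.2) :=
        (measurable_fst.mul ((hFmono.measurable).comp measurable_snd)).add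
          ((measurable_const.sub measurable_fst).mul ((hFmmono.measurable).comp measurable_snd))
      have hψ : Measurable (fun p : ℝ × ℝ => p.1 * G p.2 + (1 - p.1) * Gm p.2) :=
        (measurable_fst.mul ((hGmono.measurable).comp measurable_snd)).add
          ((measurable_const.sub measurable_fst).mul ((hGmmono.measurable).comp measurable_snd))
      have h1 := hpair.comp hφ hψ
      have hRe : ((fun p : ℝ × ℝ => p.1 * F p.2 + (1 - p.1) * Fm p.2) ∘
          (fun ω => (U ω, X ω))) = R := by
        funext ω
        simp only [Function.comp]
        rw [hR]
      have hSe : ((fun p : ℝ × ℝ => p.1 * G p.2 + (1 - p.1) * Gm p.2) ∘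
          (fun ω => (V ω, Y ω))) = S := by
        funext ω
        simp only [Function.comp]
        rw [hS]
      rwa [hRe, hSe] at h1
    have hmapR : Measure.map R P = volume.restrict (Set.Icc (0:ℝ) 1) :=
      PITaux.pit_map P hU hX hUunif hUX F Fm hF hFm R hR
    have hmapS : Measure.map S P = volume.restrict (Set.Icc (0:ℝ) 1) :=
      PITaux.pit_map P hV hY hVunif hVY G Gm hG hGm S hS
    rw [(ProbabilityTheory.indepFun_iff_map_prod_eq_prod_map_map hRmeas.aemeasurable
      hSmeas.aemeasurable).mp hRS, hmapR, hmapS, MeasureTheory.Measure.prod_restrict,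
      ← MeasureTheory.Measure.volume_eq_prod]
end

section
/- Let (X_n, Y_n) be i.i.d. pairs and (M_n) a sequence of measurable functions M_n : ℝ^{2n} → [0,∞) adapted to 𝓕_n = σ(X_i, Y_i, i ≤ n). Suppose that for every product distribution P = P_X ⊗ P_Y (i.e. every P under which X and Y are independent), the process (M_n(X_1,…,X_n,Y_1,…,Y_n)) is a supermartingale. Then for every n and all vectors x ∈ ℝ^{n+1}, y ∈ ℝ^{n+1}, M_n(x_1,…,x_n, y_1,…,y_n) ≥ M_{n+1}(x_1,…,x_{n+1}, y_1,…,y_{n+1}). In particular M_n ≤ M_0 pointwise, so no such test martingale can ever exceed its initial value. -/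
/-!
Fix `x, y ∈ ℝⁿ⁺¹`. Let `μ` put mass `t` on `xₙ₊₁` and spread the remaining `1 - t` uniformly over
all coordinates of `x`, and let `ν` do the same for `y`. Under `(μ ⊗ ν)^⊗∞` the past
`(x₁, …, xₙ, y₁, …, yₙ)` is an atom, so the supermartingale inequality holds there, and since `M`
is nonnegative the next expected value is at least `t² M_{n+1}(x, y)`. Letting `t → 1` gives
`M_{n+1}(x, y) ≤ M_n(x₁, …, xₙ, y₁, …, yₙ)`.
-/

open MeasureTheory ProbabilityTheory Set Filter Topology

section MeasureFacts

variable {α β : Type*} [MeasurableSpace α] [MeasurableSpace β] {μ : Measure α}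

theorem Filter.Eventually.self_of_measure_singleton_ne_zero {p : α → Prop}
    (h : ∀ᵐ x ∂μ, p x) {a : α} (ha : μ {a} ≠ 0) : p a := by
  by_contra hpa
  exact ha (measure_mono_null (singleton_subset_iff.2 hpa) (ae_iff.1 h))

theorem ae_prod_mem_of_ae_mem {ν : Measure β} [SFinite ν] {s : Set α} {t : Set β}
    (hs : ∀ᵐ x ∂μ, x ∈ s) (ht : ∀ᵐ y ∂ν, y ∈ t) : ∀ᵐ z ∂μ.prod ν, z ∈ s ×ˢ t :=
  (Measure.quasiMeasurePreserving_fst.ae hs).and (Measure.quasiMeasurePreserving_snd.ae ht)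

variable [MeasurableSingletonClass α]

theorem integrable_of_ae_mem_finite [IsFiniteMeasure μ] {E : Type*} [NormedAddCommGroup E]
    {s : Set α} (hs : s.Finite) (h : ∀ᵐ x ∂μ, x ∈ s) (f : α → E) : Integrable f μ := by
  rw [← Measure.restrict_eq_self_of_ae_mem h]
  exact IntegrableOn.of_finite hs

theorem measureReal_singleton_mul_le_integral {f : α → ℝ} (hf : 0 ≤ f) (hint : Integrable f μ)
    (a : α) : μ.real {a} * f a ≤ ∫ x, f x ∂μ := by
  simpa [integral_singleton, measureReal_def] using
    setIntegral_le_integral hint (.of_forall hf) (s := {a})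

theorem uniformOn_singleton_ne_zero {s : Set α} (hs : s.Finite) {a : α} (ha : a ∈ s) :
    uniformOn s {a} ≠ 0 := by
  rw [uniformOn, cond_apply hs.measurableSet, inter_eq_right.2 (singleton_subset_iff.2 ha),
    Measure.count_singleton, mul_one]
  exact ENNReal.inv_ne_zero.2 (Measure.count_apply_lt_top.2 hs).ne

end MeasureFacts

section DiracMix

variable {α : Type*} [MeasurableSpace α]

noncomputable def diracMix (t : ℝ) (a : α) (ν : Measure α) : Measure α :=
  ENNReal.ofReal t • Measure.dirac a + ENNReal.ofReal (1 - t) • ν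

variable {t : ℝ} {a : α} {ν : Measure α}

theorem isProbabilityMeasure_diracMix [IsProbabilityMeasure ν] (ht₀ : 0 ≤ t) (ht₁ : t ≤ 1) :
    IsProbabilityMeasure (diracMix t a ν) := by
  constructor
  simp [diracMix, ← ENNReal.ofReal_add ht₀ (sub_nonneg.2 ht₁)]

theorem le_diracMix_singleton_self : ENNReal.ofReal t ≤ diracMix t a ν {a} := by
  simp [diracMix]

theorem diracMix_singleton_ne_zero (ht : t < 1) {b : α} (hb : ν {b} ≠ 0) :
    diracMix t a ν {b} ≠ 0 := by
  refine ne_of_gt (lt_of_lt_of_le ?_ le_add_self)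
  simpa [pos_iff_ne_zero, ht] using hb

theorem ae_mem_diracMix [MeasurableSingletonClass α] {s : Set α} (ha : a ∈ s)
    (hν : ∀ᵐ x ∂ν, x ∈ s) : ∀ᵐ x ∂diracMix t a ν, x ∈ s := by
  rw [diracMix, ae_add_measure_iff]
  exact ⟨Measure.ae_smul_measure (by rwa [ae_dirac_eq, eventually_pure]) _,
    Measure.ae_smul_measure hν _⟩

end DiracMix

theorem apply_le_apply_zero_of_le_init {α β : Type*} [Preorder β]
    {M : (n : ℕ) → (Fin n → α) → (Fin n → α) → β}
    (h : ∀ n (x y : Fin (n + 1) → α), M (n + 1) x y ≤ M n (Fin.init x) (Fin.init y)) :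
    ∀ n (x y : Fin n → α), M n x y ≤ M 0 (fun i => i.elim0) (fun i => i.elim0)
  | 0, x, y => by rw [Subsingleton.elim x, Subsingleton.elim y]
  | n + 1, x, y => (h n x y).trans (apply_le_apply_zero_of_le_init h n _ _)

/-- Supermartingale property of `M` under every product law `(μ ⊗ ν)^⊗∞` of the pairs `(Xᵢ, Yᵢ)`:
the integral is the conditional expectation of the next value given the past `p`. -/
def IsProductSupermartingale (M : (n : ℕ) → (Fin n → ℝ) → (Fin n → ℝ) → ℝ) : Prop :=
  ∀ (μ ν : Measure ℝ), IsProbabilityMeasure μ → IsProbabilityMeasure ν →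
    ∀ n : ℕ,
      ∀ᵐ p : (Fin n → ℝ) × (Fin n → ℝ)
          ∂((Measure.pi fun _ : Fin n => μ).prod (Measure.pi fun _ : Fin n => ν)),
        ∫ z : ℝ × ℝ, M (n + 1) (Fin.snoc p.1 z.1) (Fin.snoc p.2 z.2) ∂(μ.prod ν) ≤
          M n p.1 p.2

namespace IsProductSupermartingale

variable {M : (n : ℕ) → (Fin n → ℝ) → (Fin n → ℝ) → ℝ} {n : ℕ}

theorem measureReal_mul_le (hM : IsProductSupermartingale M)
    (hnonneg : ∀ x y, 0 ≤ M (n + 1) x y) {μ ν : Measure ℝ} [IsProbabilityMeasure μ]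
    [IsProbabilityMeasure ν] {S T : Set ℝ} (hS : S.Finite) (hT : T.Finite)
    (hμS : ∀ᵐ s ∂μ, s ∈ S) (hνT : ∀ᵐ t ∂ν, t ∈ T) {x y : Fin (n + 1) → ℝ}
    (hx : ∀ i, μ {Fin.init x i} ≠ 0) (hy : ∀ i, ν {Fin.init y i} ≠ 0) :
    μ.real {x (Fin.last n)} * ν.real {y (Fin.last n)} * M (n + 1) x y ≤
      M n (Fin.init x) (Fin.init y) := by
  set f : ℝ × ℝ → ℝ := fun z => M (n + 1) (Fin.snoc (Fin.init x) z.1) (Fin.snoc (Fin.init y) z.2)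
  have hpast : ((Measure.pi fun _ => μ).prod (Measure.pi fun _ => ν))
      {(Fin.init x, Fin.init y)} ≠ 0 := by
    rw [← singleton_prod_singleton, Measure.prod_prod, Measure.pi_singleton,
      Measure.pi_singleton]
    exact mul_ne_zero (Finset.prod_ne_zero_iff.2 fun i _ => hx i)
      (Finset.prod_ne_zero_iff.2 fun i _ => hy i)
  have hstep : ∫ z, f z ∂μ.prod ν ≤ M n (Fin.init x) (Fin.init y) :=
    (hM μ ν ‹_› ‹_› n).self_of_measure_singleton_ne_zero hpast
  have hf : Integrable f (μ.prod ν) :=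
    integrable_of_ae_mem_finite (hS.prod hT) (ae_prod_mem_of_ae_mem hμS hνT) f
  calc μ.real {x (Fin.last n)} * ν.real {y (Fin.last n)} * M (n + 1) x y
      = (μ.prod ν).real {(x (Fin.last n), y (Fin.last n))} *
          f (x (Fin.last n), y (Fin.last n)) := by
        simp [f, ← singleton_prod_singleton, measureReal_prod_prod, Fin.snoc_init_self]
    _ ≤ ∫ z, f z ∂μ.prod ν := measureReal_singleton_mul_le_integral (fun _ => hnonneg _ _) hf _
    _ ≤ M n (Fin.init x) (Fin.init y) := hstep

theorem mul_self_mul_le (hM : IsProductSupermartingale M) (hnonneg : ∀ x y, 0 ≤ M (n + 1) x y)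
    {t : ℝ} (ht₀ : 0 < t) (ht₁ : t < 1) (x y : Fin (n + 1) → ℝ) :
    t * t * M (n + 1) x y ≤ M n (Fin.init x) (Fin.init y) := by
  set ρ : (Fin (n + 1) → ℝ) → Measure ℝ :=
    fun z => diracMix t (z (Fin.last n)) (uniformOn (range z))
  have hprob (z : Fin (n + 1) → ℝ) : IsProbabilityMeasure (ρ z) :=
    have := isProbabilityMeasure_uniformOn (finite_range z) (range_nonempty z)
    isProbabilityMeasure_diracMix ht₀.le ht₁.le
  have hlast (z : Fin (n + 1) → ℝ) : t ≤ (ρ z).real {z (Fin.last n)} :=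
    (ENNReal.toReal_ofReal ht₀.le).symm.trans_le
      (ENNReal.toReal_mono (measure_ne_top _ _) le_diracMix_singleton_self)
  have hinit (z : Fin (n + 1) → ℝ) (i : Fin n) : ρ z {Fin.init z i} ≠ 0 :=
    diracMix_singleton_ne_zero ht₁ (uniformOn_singleton_ne_zero (finite_range z) (mem_range_self _))
  have hsupp (z : Fin (n + 1) → ℝ) : ∀ᵐ s ∂ρ z, s ∈ range z :=
    ae_mem_diracMix (mem_range_self _) (ae_cond_mem (finite_range z).measurableSet)
  calc t * t * M (n + 1) x y
      ≤ (ρ x).real {x (Fin.last n)} * (ρ y).real {y (Fin.last n)} * M (n + 1) x y := by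
        gcongr
        exacts [hnonneg x y, hlast x, hlast y]
    _ ≤ M n (Fin.init x) (Fin.init y) :=
        hM.measureReal_mul_le hnonneg (finite_range x) (finite_range y) (hsupp x) (hsupp y)
          (hinit x) (hinit y)

theorem le_init (hM : IsProductSupermartingale M) (hnonneg : ∀ x y, 0 ≤ M (n + 1) x y)
    (x y : Fin (n + 1) → ℝ) : M (n + 1) x y ≤ M n (Fin.init x) (Fin.init y) := by
  have hlim : Tendsto (fun t : ℝ => t * t * M (n + 1) x y) (𝓝[<] 1) (𝓝 (M (n + 1) x y)) := by
    have hcont : Continuous fun t : ℝ => t * t * M (n + 1) x y := by fun_prop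
    simpa using (hcont.tendsto 1).mono_left nhdsWithin_le_nhds
  exact le_of_tendsto hlim <| eventually_of_mem (Ioo_mem_nhdsLT zero_lt_one)
    fun t ht => hM.mul_self_mul_le hnonneg ht.1 ht.2 x y

end IsProductSupermartingale

theorem no_test_martingale_for_independence_general
    (M : (n : ℕ) → (Fin n → ℝ) → (Fin n → ℝ) → ℝ)
    (hnonneg : ∀ n x y, 0 ≤ M n x y)
    (hsuper : ∀ (μ ν : Measure ℝ), IsProbabilityMeasure μ → IsProbabilityMeasure ν →
      ∀ n : ℕ,
        ∀ᵐ p : (Fin n → ℝ) × (Fin n → ℝ)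
            ∂((Measure.pi fun _ : Fin n => μ).prod (Measure.pi fun _ : Fin n => ν)),
          ∫ z : ℝ × ℝ, M (n + 1) (Fin.snoc p.1 z.1) (Fin.snoc p.2 z.2) ∂(μ.prod ν) ≤
            M n p.1 p.2) :
    (∀ (n : ℕ) (x y : Fin (n + 1) → ℝ),
      M (n + 1) x y ≤ M n (fun i => x i.castSucc) (fun i => y i.castSucc)) ∧
    (∀ (n : ℕ) (x y : Fin n → ℝ), M n x y ≤ M 0 (fun i => i.elim0) (fun i => i.elim0)) := by
  have hstep : ∀ n (x y : Fin (n + 1) → ℝ), M (n + 1) x y ≤ M n (Fin.init x) (Fin.init y) :=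
    fun n => IsProductSupermartingale.le_init hsuper (hnonneg (n + 1))
  exact ⟨hstep, apply_le_apply_zero_of_le_init hstep⟩

/-- **Impossibility of test martingales for independence.**
Let `M n : ℝⁿ × ℝⁿ → [0,∞)` be measurable functions of the first `n`
observations.  Suppose that for every pair of probability measures `μ, ν` on `ℝ`
(so that the pairs `(Xᵢ, Yᵢ)` are i.i.d. with `X ⟂ Y`, i.e. `P = (μ ⊗ ν)^⊗∞`),
the process `M n (X₁,…,Xₙ, Y₁,…,Yₙ)` is a supermartingale; this is expressed by
the conditional-expectation inequality: for `(μ^⊗ⁿ ⊗ ν^⊗ⁿ)`-almost every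
`(x, y)`, the expected next value `∫ M (n+1) (x ⧺ s, y ⧺ t) d(μ ⊗ ν)(s,t)` is at
most `M n (x, y)`.  Then `M` is pointwise non-increasing, and in particular
never exceeds its initial value. -/
theorem no_test_martingale_for_independence
    (M : (n : ℕ) → (Fin n → ℝ) → (Fin n → ℝ) → ℝ)
    (hmeas : ∀ n, Measurable (fun p : (Fin n → ℝ) × (Fin n → ℝ) => M n p.1 p.2))
    (hnonneg : ∀ n x y, 0 ≤ M n x y)
    (hsuper : ∀ (μ ν : Measure ℝ), IsProbabilityMeasure μ → IsProbabilityMeasure ν →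
      ∀ n : ℕ,
        ∀ᵐ p : (Fin n → ℝ) × (Fin n → ℝ)
            ∂((Measure.pi fun _ : Fin n => μ).prod (Measure.pi fun _ : Fin n => ν)),
          ∫ z : ℝ × ℝ, M (n + 1) (Fin.snoc p.1 z.1) (Fin.snoc p.2 z.2) ∂(μ.prod ν) ≤
            M n p.1 p.2) :
    (∀ (n : ℕ) (x y : Fin (n + 1) → ℝ),
      M (n + 1) x y ≤ M n (fun i => x i.castSucc) (fun i => y i.castSucc)) ∧
    (∀ (n : ℕ) (x y : Fin n → ℝ), M n x y ≤ M 0 (fun i => i.elim0) (fun i => i.elim0)) :=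
  no_test_martingale_for_independence_general M hnonneg hsuper
end
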